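/- The sum over all multi-indices m ∈ ℕ^N with |m| ≤ p of (m_1+1)^2 equals (N+p+2 choose N+2) + (N+p+1 choose N+2). -/

import Mathlib

/-! Peeling off the last coordinate, the sum over `m ∈ ℕ^(N+1)` with `|m| ≤ p` is the sum over
`q ≤ p` of the same sum in dimension `N` with `|m| ≤ q`. So the sum over `ℕ^N` is the `(N-1)`-fold
iterated partial sum of `(j + 1)^2 = C(j+2, 2) + C(j+1, 2)`, and by the hockey stick identity
`∑_{q ≤ p} C(k+q, k) = C(k+1+p, k+1)` each partial summation raises the binomials from `k` to `k+1`. -/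

/-- The finset of multi-indices `m : Fin N → ℕ` with `|m| = ∑ i, m i ≤ p`. -/
def multiIdx (N p : ℕ) : Finset (Fin N → ℕ) :=
  (Fintype.piFinset fun _ : Fin N => Finset.range (p + 1)).filter
    fun m => ∑ i, m i ≤ p

open Finset

lemma mem_multiIdx {N p : ℕ} {m : Fin N → ℕ} : m ∈ multiIdx N p ↔ ∑ i, m i ≤ p := by
  simp only [multiIdx, mem_filter, Fintype.mem_piFinset, mem_range, and_iff_right_iff_imp]
  exact fun h i => Nat.lt_succ_of_le <| (single_le_sum (fun j _ => Nat.zero_le (m j))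
    (mem_univ i)).trans h

lemma sum_multiIdx_succ {β : Type*} [AddCommMonoid β] (N p : ℕ) (f : (Fin (N + 1) → ℕ) → β) :
    ∑ m ∈ multiIdx (N + 1) p, f m =
      ∑ j ∈ range (p + 1), ∑ m ∈ multiIdx N (p - j), f (Fin.snoc m j) := by
  rw [← sum_sigma (range (p + 1)) (fun j => multiIdx N (p - j)) fun x => f (Fin.snoc x.2 x.1)]
  refine sum_nbij' (fun m => ⟨m (Fin.last N), Fin.init m⟩) (fun x => Fin.snoc x.2 x.1)
    ?_ ?_ (fun m _ => by simp) (fun x _ => by simp) (fun m _ => by simp)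
  · intro m hm
    rw [mem_multiIdx, Fin.sum_univ_castSucc] at hm
    simp only [mem_sigma, mem_range, mem_multiIdx, Fin.init]
    omega
  · rintro ⟨j, m⟩ hm
    simp only [mem_sigma, mem_range, mem_multiIdx] at hm
    rw [mem_multiIdx, Fin.sum_univ_castSucc]
    simp only [Fin.snoc_castSucc, Fin.snoc_last]
    omega

lemma sum_multiIdx_one_apply_zero {β : Type*} [AddCommMonoid β] (g : ℕ → β) (p : ℕ) :
    ∑ m ∈ multiIdx 1 p, g (m 0) = ∑ j ∈ range (p + 1), g j := by
  rw [sum_multiIdx_succ]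
  refine sum_congr rfl fun j _ => ?_
  have multiIdx_zero : multiIdx 0 (p - j) = {Fin.elim0} := by
    ext m
    simp [mem_multiIdx, Subsingleton.elim m Fin.elim0]
  simp [multiIdx_zero, Fin.snoc_zero]

lemma sum_multiIdx_succ_succ_apply_zero {β : Type*} [AddCommMonoid β] (g : ℕ → β) (N p : ℕ) :
    ∑ m ∈ multiIdx (N + 2) p, g (m 0) =
      ∑ q ∈ range (p + 1), ∑ m ∈ multiIdx (N + 1) q, g (m 0) := by
  rw [sum_multiIdx_succ, ← sum_range_reflect]
  refine sum_congr rfl fun q hq => ?_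
  rw [show p - (p + 1 - 1 - q) = q by simp at hq; omega]
  exact sum_congr rfl fun m _ => congrArg g (Fin.snoc_castSucc (α := fun _ => ℕ) _ _ 0)

lemma add_one_sq_eq_choose_two_add_choose_two (j : ℕ) :
    (j + 1) ^ 2 = (j + 2).choose 2 + (j + 1).choose 2 := by
  have h₁ := Nat.add_one_mul_choose_eq (j + 1) 1
  have h₂ := Nat.add_one_mul_choose_eq j 1
  simp only [Nat.choose_one_right] at h₁ h₂
  nlinarith

lemma sum_range_choose_add_choose (N p : ℕ) :
    ∑ q ∈ range (p + 1), ((N + q + 2).choose (N + 2) + (N + q + 1).choose (N + 2)) =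
      (N + 1 + p + 2).choose (N + 1 + 2) + (N + 1 + p + 1).choose (N + 1 + 2) := by
  induction p with
  | zero => simp
  | succ p ih =>
    rw [sum_range_succ, ih, show N + (p + 1) = N + 1 + p by ring,
      show N + 1 + (p + 1) = N + 1 + p + 1 by ring,
      Nat.choose_succ_succ' (N + 1 + p + 2) (N + 2), Nat.choose_succ_succ' (N + 1 + p + 1) (N + 2)]
    ring

lemma sum_multiIdx_succ_sq (N p : ℕ) :
    ∑ m ∈ multiIdx (N + 1) p, (m 0 + 1) ^ 2 =
      (N + 1 + p + 2).choose (N + 1 + 2) + (N + 1 + p + 1).choose (N + 1 + 2) := by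
  induction N generalizing p with
  | zero =>
    rw [sum_multiIdx_one_apply_zero (fun j => (j + 1) ^ 2)]
    simpa [add_one_sq_eq_choose_two_add_choose_two] using sum_range_choose_add_choose 0 p
  | succ N ih =>
    rw [sum_multiIdx_succ_succ_apply_zero (fun j => (j + 1) ^ 2)]
    simp only [ih]
    exact sum_range_choose_add_choose (N + 1) p

theorem sum_multiIdx_sq {N p : ℕ} (hN : 1 ≤ N) :
    ∑ m ∈ multiIdx N p, (m ⟨0, by omega⟩ + 1) ^ 2 =
      (N + p + 2).choose (N + 2) + (N + p + 1).choose (N + 2) := by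
  obtain ⟨N, rfl⟩ : ∃ M, N = M + 1 := ⟨N - 1, by omega⟩
  exact sum_multiIdx_succ_sq N p
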